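/- Let 𝒪 be the ring of integers of an imaginary quadratic field, V_0 a closed fundamental domain for translation by 𝒪 with interior U_0, and M = {c ∈ 𝒪 : c + V_0 ⊄ U_0^{-1}}. Then every α ∈ ℂ can be expressed in at most one way as a convergent infinite continued fraction α = [c_1, c_2, c_3, …] with c_i ∈ 𝒪 for all i and c_i ∉ M for all i > 1. -/

import Mathlib

/-!
Write `[a_k; a_{k+1}, …, a_n]` for the tails of the convergents, and call `c ∈ 𝒪 \ M` good.
Good partial quotients satisfy `(c + V₀)⁻¹ ⊆ W`, so iterating them traps values in `W`.
The key claim is that whenever the `k`-th tails converge (along a suitable subsequence) to `δ`,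
we have `δ - a_k ∈ W ⊆ U₀`. Since the translates `c + U₀` are disjoint, `a_k` is then determined
by `δ`; moreover `δ ≠ a_k`, so the `(k+1)`-st tails converge to `(δ - a_k)⁻¹`, and induction on `k`
shows that two expansions of `α` agree.

If `0 ∈ V₀` the tails themselves lie in `a_k + W`, which gives the claim. Otherwise pick `f ∈ 𝒪`
with `-f ∈ V₀` and replace the last partial quotient `a_n` by `a_n - f`: the resulting values
are trapped in `a_k + W` and differ from the true ones by `± f / (q_n (q_n - f q_{n-1}))`. If
`δ - a_k ∉ W`, this bounds the continuant matrices, which have entries in the discrete ring `𝒪`, so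
two of them coincide; the continuant matrix of the block in between is then the identity, whose
lower-left entry cannot be the (nonzero) denominator of a convergent.

With `0⁻¹ = 0`, a vanishing tail collapses a convergent onto an earlier one; we work along the
infinitely many `n` for which no tail `[a_j; …, a_n]` with `j ≥ 1` vanishes.
-/

open Filter Topology

/-- Finite continued fraction of a list of complex numbers. -/
noncomputable def cfC : List ℂ → ℂ
  | [] => 0
  | [c] => c
  | c :: l => c + (cfC l)⁻¹

lemma eventually_eq_of_tendsto_of_mem_finite {ι X : Type*} [TopologicalSpace X] [T1Space X]
    {l : Filter ι} {u : ι → X} {x : X} {S : Set X} (hu : Tendsto u l (𝓝 x)) (hS : S.Finite)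
    (hmem : ∀ i, u i ∈ S) : ∀ᶠ i in l, u i = x := by
  have hnhds : (S \ {x})ᶜ ∈ 𝓝 x := (hS.sdiff.isClosed.isOpen_compl).mem_nhds (by simp)
  filter_upwards [hu hnhds] with i hi
  by_contra h
  exact hi ⟨hmem i, h⟩

noncomputable def cfEval : List ℂ → ℂ → ℂ
  | [], z => z
  | x :: l, z => x + (cfEval l z)⁻¹

@[simp] lemma cfEval_nil (z : ℂ) : cfEval [] z = z := rfl

@[simp] lemma cfEval_cons (x : ℂ) (l : List ℂ) (z : ℂ) :
    cfEval (x :: l) z = x + (cfEval l z)⁻¹ := rfl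

lemma cfEval_append (l₁ l₂ : List ℂ) (z : ℂ) :
    cfEval (l₁ ++ l₂) z = cfEval l₁ (cfEval l₂ z) := by
  induction l₁ with
  | nil => rfl
  | cons x l ih => simp [ih]

lemma cfC_cons {l : List ℂ} (x : ℂ) (hl : l ≠ []) : cfC (x :: l) = x + (cfC l)⁻¹ := by
  obtain ⟨y, m, rfl⟩ := List.exists_cons_of_ne_nil hl
  rfl

lemma cfC_append_singleton (l : List ℂ) (z : ℂ) : cfC (l ++ [z]) = cfEval l z := by
  induction l with
  | nil => rfl
  | cons x l ih => rw [List.cons_append, cfC_cons x (by simp), ih, cfEval_cons]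

noncomputable def contMat (l : List ℂ) : Matrix (Fin 2) (Fin 2) ℂ :=
  (l.map fun x => !![x, 1; 1, 0]).prod

@[simp] lemma contMat_nil : contMat [] = 1 := rfl

lemma contMat_cons (x : ℂ) (l : List ℂ) : contMat (x :: l) = !![x, 1; 1, 0] * contMat l := rfl

lemma contMat_append (l₁ l₂ : List ℂ) : contMat (l₁ ++ l₂) = contMat l₁ * contMat l₂ := by
  simp [contMat]

lemma det_contMat (l : List ℂ) : (contMat l).det = (-1) ^ l.length := by
  induction l with
  | nil => simp
  | cons x l ih =>
    rw [contMat_cons, Matrix.det_mul, ih, Matrix.det_fin_two_of, List.length_cons, pow_succ']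
    ring

lemma contMat_mem_subring (O : Subring ℂ) {l : List ℂ} (hl : ∀ x ∈ l, x ∈ O) (i j : Fin 2) :
    contMat l i j ∈ O := by
  induction l generalizing i with
  | nil => fin_cases i <;> fin_cases j <;> simp [O.zero_mem, O.one_mem]
  | cons x l ih =>
    have hx := hl x List.mem_cons_self
    have ih' := fun i => ih (fun y hy => hl y (List.mem_cons_of_mem x hy)) i
    fin_cases i <;> simp [contMat_cons, Matrix.mul_apply, Fin.sum_univ_two] <;>
      first
      | exact O.add_mem (O.mul_mem hx (ih' 0)) (ih' 1)
      | exact ih' 0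

def SuffixesNeZero : List ℂ → ℂ → Prop
  | [], _ => True
  | _ :: l, z => cfEval l z ≠ 0 ∧ SuffixesNeZero l z

lemma cfEval_eq_div (l : List ℂ) (z : ℂ) (h : SuffixesNeZero l z) :
    contMat l 1 0 * z + contMat l 1 1 ≠ 0 ∧
      cfEval l z = (contMat l 0 0 * z + contMat l 0 1) / (contMat l 1 0 * z + contMat l 1 1) := by
  induction l with
  | nil => simp
  | cons x l ih =>
    obtain ⟨hne, htail⟩ := h
    obtain ⟨hden, heq⟩ := ih htail
    have hnum : contMat l 0 0 * z + contMat l 0 1 ≠ 0 := by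
      rintro h0; rw [heq, h0, zero_div] at hne; exact hne rfl
    simp only [contMat_cons, Matrix.mul_apply, Fin.sum_univ_two, Matrix.of_apply,
      Matrix.cons_val', Matrix.cons_val_zero, Matrix.cons_val_one, Matrix.empty_val',
      Matrix.cons_val_fin_one, one_mul, zero_mul, add_zero, cfEval_cons, heq, inv_div]
    refine ⟨hnum, ?_⟩
    rw [eq_div_iff hnum, add_mul, div_mul_cancel₀ _ hnum]
    ring

lemma cfEval_sub_eq_div (l : List ℂ) (x f : ℂ) (h : SuffixesNeZero l (x - f)) :
    contMat (l ++ [x]) 1 0 - f * contMat (l ++ [x]) 1 1 ≠ 0 ∧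
      cfEval l (x - f) = (contMat (l ++ [x]) 0 0 - f * contMat (l ++ [x]) 0 1) /
        (contMat (l ++ [x]) 1 0 - f * contMat (l ++ [x]) 1 1) := by
  obtain ⟨hden, heq⟩ := cfEval_eq_div l (x - f) h
  have hentries : ∀ i, contMat (l ++ [x]) i 0 - f * contMat (l ++ [x]) i 1 =
      contMat l i 0 * (x - f) + contMat l i 1 := by
    intro i
    simp [contMat_append, contMat_cons, Matrix.mul_apply, Fin.sum_univ_two]
    ring
  rw [hentries, hentries]
  exact ⟨hden, heq⟩

noncomputable def seg (a : ℕ → ℂ) (j n : ℕ) : List ℂ := (List.range' j (n - j)).map a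

noncomputable def cfTail (a : ℕ → ℂ) (j n : ℕ) : ℂ := cfEval (seg a j n) (a n)

def TailsNeZero (a : ℕ → ℂ) (n : ℕ) : Prop := ∀ j, 0 < j → j ≤ n → cfTail a j n ≠ 0

section Sequences

variable (a : ℕ → ℂ) {j k ℓ n : ℕ}

@[simp] lemma seg_self (n : ℕ) : seg a n n = [] := by simp [seg]

lemma seg_eq_cons (h : j < n) : seg a j n = a j :: seg a (j + 1) n := by
  rw [seg, show n - j = n - (j + 1) + 1 by omega, List.range'_succ]
  rfl

lemma seg_append (hjk : j ≤ k) (hkn : k ≤ n) : seg a j n = seg a j k ++ seg a k n := by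
  rw [seg, seg, seg, show n - j = (k - j) + (n - k) by omega, ← List.range'_append_1,
    show j + (k - j) = k by omega, List.map_append]

lemma seg_succ (h : j ≤ n) : seg a j (n + 1) = seg a j n ++ [a n] := by
  rw [seg_append a h n.le_succ, seg_eq_cons a n.lt_succ_self, seg_self]

lemma mem_seg {x : ℂ} (hx : x ∈ seg a j n) : ∃ i, j ≤ i ∧ i < n ∧ a i = x := by
  obtain ⟨i, hi, rfl⟩ := List.mem_map.1 hx
  rw [List.mem_range'_1] at hi
  exact ⟨i, hi.1, by omega, rfl⟩

@[simp] lemma cfTail_self (n : ℕ) : cfTail a n n = a n := by simp [cfTail]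

lemma cfTail_eq_add_inv (h : j < n) : cfTail a j n = a j + (cfTail a (j + 1) n)⁻¹ := by
  rw [cfTail, seg_eq_cons a h, cfEval_cons, cfTail]

lemma cfTail_add_one (h : j < n) : cfTail a (j + 1) n = (cfTail a j n - a j)⁻¹ := by
  simp [cfTail_eq_add_inv a h]

lemma cfTail_eq_cfEval (hjk : j ≤ k) (hkn : k ≤ n) :
    cfTail a j n = cfEval (seg a j k) (cfTail a k n) := by
  rw [cfTail, seg_append a hjk hkn, cfEval_append, cfTail]

lemma cfC_ofFn (n : ℕ) : cfC (List.ofFn fun i : Fin (n + 1) => a i) = cfTail a 0 n := by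
  rw [cfTail, ← cfC_append_singleton, ← seg_succ a n.zero_le]
  congr 1
  refine List.ext_getElem (by simp [seg]) fun i _ _ => ?_
  simp only [seg, List.getElem_map, List.getElem_range', List.getElem_ofFn]
  simp

lemma suffixesNeZero_seg {z : ℂ} (hℓ : ℓ ≤ n)
    (h : ∀ j, ℓ < j → j ≤ n → cfEval (seg a j n) z ≠ 0) : SuffixesNeZero (seg a ℓ n) z := by
  induction hℓ using Nat.decreasingInduction with
  | self => simp [SuffixesNeZero]
  | of_succ ℓ hℓn ih =>
    rw [seg_eq_cons a hℓn]
    exact ⟨h (ℓ + 1) ℓ.lt_succ_self hℓn, ih fun j hj hjn => h j (by omega) hjn⟩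

lemma cfTail_eq_div (hzf : TailsNeZero a n) (hℓ : ℓ ≤ n) :
    contMat (seg a ℓ (n + 1)) 1 0 ≠ 0 ∧
      cfTail a ℓ n = contMat (seg a ℓ (n + 1)) 0 0 / contMat (seg a ℓ (n + 1)) 1 0 := by
  have hsuff : SuffixesNeZero (seg a ℓ n) (a n - 0) := by
    rw [sub_zero]
    exact suffixesNeZero_seg a hℓ fun j hj hjn => by
      simpa [cfTail] using hzf j (by omega) hjn
  simpa [seg_succ a hℓ, cfTail] using cfEval_sub_eq_div (seg a ℓ n) (a n) 0 hsuff

lemma contMat_seg_ne {n₁ n₂ : ℕ} (hℓ : ℓ ≤ n₁) (h : n₁ < n₂) (hzf : TailsNeZero a n₂) :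
    contMat (seg a ℓ (n₁ + 1)) ≠ contMat (seg a ℓ (n₂ + 1)) := by
  intro heq
  set M := contMat (seg a ℓ (n₁ + 1))
  set N := contMat (seg a (n₁ + 1) (n₂ + 1))
  have hsplit : contMat (seg a ℓ (n₂ + 1)) = M * N := by
    rw [seg_append a (by omega : ℓ ≤ n₁ + 1) (by omega : n₁ + 1 ≤ n₂ + 1), contMat_append]
  have hM : IsUnit M.det := by
    rw [det_contMat]
    exact isUnit_neg_one.pow _
  have hN : N = 1 := by
    calc N = M⁻¹ * (M * N) := by rw [← Matrix.mul_assoc, Matrix.nonsing_inv_mul _ hM, one_mul]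
      _ = 1 := by rw [← hsplit, ← heq, Matrix.nonsing_inv_mul _ hM]
  have hden := (cfTail_eq_div a hzf h).1
  simp [N, hN] at hden

lemma cfTail_ne_cfTail_succ (hn : a (n + 1) ≠ 0) (hj : j ≤ n) :
    cfTail a j n ≠ cfTail a j (n + 1) := by
  induction hj using Nat.decreasingInduction with
  | self => simpa [cfTail_eq_add_inv a n.lt_succ_self] using hn
  | of_succ j hjn ih =>
    intro h
    apply ih
    rw [cfTail_add_one a hjn, cfTail_add_one a (by omega), h]

lemma cfTail_eq_of_cfTail_eq_zero (hjk : j ≤ k) (hkn : k < n) (h : cfTail a (k + 1) n = 0) :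
    cfTail a j n = cfTail a j k := by
  rw [cfTail_eq_cfEval a (hjk.trans k.le_succ) hkn, h, seg_succ a hjk, cfEval_append]
  simp [cfTail]

lemma exists_tailsNeZero_cfTail_eq (n : ℕ) :
    ∃ m ≤ n, TailsNeZero a m ∧ cfTail a 0 m = cfTail a 0 n := by
  induction n using Nat.strong_induction_on with
  | _ n ih =>
    by_cases h : TailsNeZero a n
    · exact ⟨n, le_rfl, h, rfl⟩
    obtain ⟨j, hj, hjn, hzero⟩ : ∃ j, 0 < j ∧ j ≤ n ∧ cfTail a j n = 0 := by
      simpa [TailsNeZero] using h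
    obtain ⟨m, hm, hzf, heq⟩ := ih (j - 1) (by omega)
    refine ⟨m, by omega, hzf, heq.trans ?_⟩
    refine (cfTail_eq_of_cfTail_eq_zero a (Nat.zero_le _) (by omega) ?_).symm
    rwa [Nat.sub_add_cancel hj]

lemma frequently_tailsNeZero (ha : ∀ i, 0 < i → a i ≠ 0) {α : ℂ}
    (hα : Tendsto (cfTail a 0) atTop (𝓝 α)) : ∃ᶠ n in atTop, TailsNeZero a n := by
  rw [frequently_atTop]
  intro N
  by_contra! hN
  have hmem : ∀ n, cfTail a 0 n ∈ cfTail a 0 '' Set.Iio N := by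
    intro n
    obtain ⟨m, -, hzf, heq⟩ := exists_tailsNeZero_cfTail_eq a n
    exact ⟨m, not_le.1 fun hm => hN m hm hzf, heq⟩
  obtain ⟨n, hn⟩ := (eventually_eq_of_tendsto_of_mem_finite hα ((Set.finite_Iio N).image _)
    hmem).exists_forall_of_atTop
  exact cfTail_ne_cfTail_succ a (ha (n + 1) n.succ_pos) n.zero_le
    ((hn n le_rfl).trans (hn (n + 1) n.le_succ).symm)

end Sequences

lemma exists_norm_entries_le {O : Subring ℂ} {m : ℝ} (hm : 0 < m)
    (hO : ∀ x ∈ O, x ≠ 0 → m ≤ ‖x‖) {f : ℂ} (hfO : f ∈ O) (hf : f ≠ 0) {ε : ℝ} (hε : 0 < ε)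
    (B : ℝ) :
    ∃ C, ∀ N : Matrix (Fin 2) (Fin 2) ℂ, (∀ i j, N i j ∈ O) → ‖N.det‖ = 1 →
      N 1 0 ≠ 0 → N 1 0 - f * N 1 1 ≠ 0 → ‖N 0 0 / N 1 0‖ ≤ B →
      ‖(N 0 0 - f * N 0 1) / (N 1 0 - f * N 1 1)‖ ≤ B →
      ε ≤ ‖(N 0 0 - f * N 0 1) / (N 1 0 - f * N 1 1) - N 0 0 / N 1 0‖ →
      ∀ i j, ‖N i j‖ ≤ C := by
  set C₁ := ‖f‖ / (ε * m)
  have hf' : 0 < ‖f‖ := norm_pos_iff.2 hf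
  refine ⟨max (max C₁ (2 * C₁ / ‖f‖)) (max (B * C₁) (2 * B * C₁ / ‖f‖)),
    fun N hN hdet hq hr hx hy hsep => ?_⟩
  rw [Matrix.det_fin_two] at hdet
  set p := N 0 0
  set p' := N 0 1
  set q := N 1 0
  set q' := N 1 1
  set r := q - f * q'
  have hB : 0 ≤ B := (norm_nonneg _).trans hx
  have hqm : m ≤ ‖q‖ := hO q (hN 1 0) hq
  have hrm : m ≤ ‖r‖ := hO r (O.sub_mem (hN 1 0) (O.mul_mem hfO (hN 1 1))) hr
  have hdiff : (p - f * p') / r - p / q = f * (p * q' - p' * q) / (r * q) := by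
    field_simp
    ring
  have hprod : ε * (‖r‖ * ‖q‖) ≤ ‖f‖ := by
    rw [hdiff, norm_div, norm_mul, hdet, mul_one, norm_mul,
      le_div_iff₀ (by positivity)] at hsep
    linarith
  have hq_le : ‖q‖ ≤ C₁ := by
    rw [le_div_iff₀ (by positivity)]
    nlinarith [norm_nonneg q]
  have hr_le : ‖r‖ ≤ C₁ := by
    rw [le_div_iff₀ (by positivity)]
    nlinarith [norm_nonneg r]
  have hq'_le : ‖q'‖ ≤ 2 * C₁ / ‖f‖ := by
    rw [le_div_iff₀ hf', mul_comm, ← norm_mul, show f * q' = q - r by ring]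
    linarith [norm_sub_le q r]
  have hp_le : ‖p‖ ≤ B * C₁ := by
    rw [show p = p / q * q by field_simp, norm_mul]
    exact mul_le_mul hx hq_le (norm_nonneg _) hB
  have hpr_le : ‖p - f * p'‖ ≤ B * C₁ := by
    rw [show p - f * p' = (p - f * p') / r * r by field_simp, norm_mul]
    exact mul_le_mul hy hr_le (norm_nonneg _) hB
  have hp'_le : ‖p'‖ ≤ 2 * B * C₁ / ‖f‖ := by
    rw [le_div_iff₀ hf', mul_comm, ← norm_mul, show f * p' = p - (p - f * p') by ring]
    linarith [norm_sub_le p (p - f * p')]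
  intro i j
  fin_cases i <;> fin_cases j
  · exact hp_le.trans ((le_max_left _ _).trans (le_max_right _ _))
  · exact hp'_le.trans ((le_max_right _ _).trans (le_max_right _ _))
  · exact hq_le.trans ((le_max_left _ _).trans (le_max_left _ _))
  · exact hq'_le.trans ((le_max_right _ _).trans (le_max_left _ _))

/-- The data of the theorem: `O` is `𝒪`, `V` is `V₀` and `W` is the closed set of the
hypothesis; an element `c` is `Good` exactly when `c ∈ 𝒪 \ M`. -/
structure CFDomain where
  O : Subring ℂ
  V : Set ℂ
  W : Set ℂ
  isCompact_V : IsCompact V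
  nonempty_interior_V : (interior V).Nonempty
  isClosed_W : IsClosed W
  W_subset_interior : W ⊆ interior V
  inv_add_mem_W : ∀ c ∈ O, (∀ v ∈ V, (c + v)⁻¹ ∈ interior V) → ∀ v ∈ V, (c + v)⁻¹ ∈ W
  eq_of_sub_mem_interior :
    ∀ c₁ ∈ O, ∀ c₂ ∈ O, ∀ z, z - c₁ ∈ interior V → z - c₂ ∈ interior V → c₁ = c₂

namespace CFDomain

variable (D : CFDomain)

def Good (c : ℂ) : Prop := c ∈ D.O ∧ ∀ v ∈ D.V, (c + v)⁻¹ ∈ interior D.V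

def goodRegion : Set ℂ := {z | ∃ g, D.Good g ∧ z - g ∈ D.V}

lemma inv_mem_W {z : ℂ} (hz : z ∈ D.goodRegion) : z⁻¹ ∈ D.W := by
  obtain ⟨g, hg, hzg⟩ := hz
  simpa using D.inv_add_mem_W g hg.1 hg.2 _ hzg

lemma cfEval_mem_goodRegion {l : List ℂ} {z : ℂ} (hl : ∀ x ∈ l, D.Good x)
    (hz : z ∈ D.goodRegion) : cfEval l z ∈ D.goodRegion := by
  induction l with
  | nil => exact hz
  | cons x l ih =>
    refine ⟨x, hl x List.mem_cons_self, ?_⟩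
    rw [cfEval_cons, add_sub_cancel_left]
    exact interior_subset <| D.W_subset_interior <| D.inv_mem_W <|
      ih fun y hy => hl y (List.mem_cons_of_mem x hy)

lemma ne_zero_of_mem_goodRegion (h0 : (0 : ℂ) ∉ D.V) {z : ℂ} (hz : z ∈ D.goodRegion) :
    z ≠ 0 := by
  rintro rfl
  exact h0 (interior_subset (D.W_subset_interior (by simpa using D.inv_mem_W hz)))

lemma exists_forall_mem_W_norm_le : ∃ R, ∀ w ∈ D.W, ‖w‖ ≤ R := by
  obtain ⟨R, hR⟩ := D.isCompact_V.isBounded.exists_norm_le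
  exact ⟨R, fun w hw => hR w (interior_subset (D.W_subset_interior hw))⟩

variable {D}

lemma Good.ne_zero {g : ℂ} (hg : D.Good g) : g ≠ 0 := by
  rintro rfl
  have hsub : D.V ⊆ interior D.V := fun v hv => by
    have h := hg.2 v⁻¹ (interior_subset (by simpa using hg.2 v hv))
    rwa [zero_add, inv_inv] at h
  have hopen : IsOpen D.V := interior_eq_iff_isOpen.1 (interior_subset.antisymm hsub)
  have huniv := IsClopen.eq_univ ⟨D.isCompact_V.isClosed, hopen⟩
    (D.nonempty_interior_V.mono interior_subset)
  exact noncompact_univ ℂ (huniv ▸ D.isCompact_V)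

lemma Good.neg_notMem_interior {g : ℂ} (hg : D.Good g) : -g ∉ interior D.V := by
  intro hmem
  obtain ⟨R, hR⟩ := D.isCompact_V.isBounded.exists_norm_le
  have hbounded : ∀ᶠ v in 𝓝[≠] (-g), ‖(g + v)⁻¹‖ ≤ R := by
    filter_upwards [nhdsWithin_le_nhds (mem_interior_iff_mem_nhds.1 hmem)] with v hv
    exact hR _ (interior_subset (hg.2 v hv))
  have hshift : Tendsto (fun v => g + v) (𝓝[≠] (-g)) (𝓝[≠] 0) := by
    refine tendsto_nhdsWithin_iff.2 ⟨?_, ?_⟩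
    · exact (Continuous.tendsto' (by fun_prop) (-g) 0 (by simp)).mono_left nhdsWithin_le_nhds
    · filter_upwards [self_mem_nhdsWithin] with v hv h
      exact hv (eq_neg_of_add_eq_zero_right h)
  obtain ⟨v, hv, hvR⟩ := ((tendsto_norm_inv_nhdsNE_zero_atTop.comp hshift).eventually
    (eventually_gt_atTop R)).and hbounded |>.exists
  exact absurd hvR (not_le.2 hv)

variable (D)

lemma exists_pos_forall_le_norm : ∃ m > 0, ∀ x ∈ D.O, x ≠ 0 → m ≤ ‖x‖ := by
  obtain ⟨u, hu⟩ := D.nonempty_interior_V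
  obtain ⟨m, hm, hball⟩ := Metric.isOpen_iff.1 isOpen_interior u hu
  refine ⟨m, hm, fun x hx hx0 => ?_⟩
  by_contra! hlt
  refine hx0 (D.eq_of_sub_mem_interior x hx 0 D.O.zero_mem (x + u) (by simpa) ?_)
  exact hball (by simpa [dist_eq_norm] using hlt)

lemma finite_mem_norm_le (C : ℝ) : {x | x ∈ D.O ∧ ‖x‖ ≤ C}.Finite := by
  obtain ⟨m, hm, hsep⟩ := D.exists_pos_forall_le_norm
  have hdist : ∀ x ∈ D.O, ∀ y ∈ D.O, x ≠ y → m ≤ dist x y := fun x hx y hy hxy => by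
    rw [dist_eq_norm]
    exact hsep _ (D.O.sub_mem hx hy) (sub_ne_zero.2 hxy)
  have hdisc : IsDiscrete (D.O : Set ℂ) := by
    refine isDiscrete_iff_forall_mem_exists_isOpen.2 fun y hy => ⟨Metric.ball y m,
      Metric.isOpen_ball, Set.eq_singleton_iff_unique_mem.2 ⟨⟨Metric.mem_ball_self hm, hy⟩, ?_⟩⟩
    rintro x ⟨hxy, hx⟩
    by_contra hne
    exact (hdist x hx y hy hne).not_gt hxy
  refine (Metric.finite_isBounded_inter_isClosed hdisc
    (Metric.isBounded_closedBall (x := 0) (r := C))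
    (Metric.isClosed_of_pairwise_le_dist hm hdist)).subset fun x hx => ⟨?_, hx.1⟩
  simpa using hx.2

variable {a : ℕ → ℂ}

lemma cfEval_seg_mem_goodRegion (ha : ∀ i, 0 < i → D.Good (a i)) {j n : ℕ} (hj : 0 < j)
    {z : ℂ} (hz : z ∈ D.goodRegion) : cfEval (seg a j n) z ∈ D.goodRegion :=
  D.cfEval_mem_goodRegion (fun x hx => by
    obtain ⟨i, hji, -, rfl⟩ := mem_seg a hx
    exact ha i (by omega)) hz

def TailLimitsMemW (a : ℕ → ℂ) (φ : ℕ → ℕ) : Prop :=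
  ∀ k δ, Tendsto (fun m => cfTail a k (φ m)) atTop (𝓝 δ) → δ - a k ∈ D.W

lemma tailLimitsMemW_of_zero_mem (h0 : (0 : ℂ) ∈ D.V) (ha : ∀ i, 0 < i → D.Good (a i))
    {φ : ℕ → ℕ} (hφ : Tendsto φ atTop atTop) : D.TailLimitsMemW a φ := by
  intro k δ hδ
  refine D.isClosed_W.mem_of_tendsto (hδ.sub_const (a k)) ?_
  filter_upwards [hφ.eventually_gt_atTop k] with m hm
  rw [← inv_inv (cfTail a k (φ m) - a k), ← cfTail_add_one a hm]
  exact D.inv_mem_W (D.cfEval_seg_mem_goodRegion ha k.succ_pos ⟨a (φ m), ha _ (by omega),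
    by simpa using h0⟩)

lemma contMat_seg_mem (haO : ∀ i, a i ∈ D.O) (k n : ℕ) (i j : Fin 2) :
    contMat (seg a k n) i j ∈ D.O :=
  contMat_mem_subring D.O (fun x hx => by
    obtain ⟨i, -, -, rfl⟩ := mem_seg a hx
    exact haO i) i j

lemma exists_norm_contMat_le (h0 : (0 : ℂ) ∉ D.V) {f : ℂ} (hfO : f ∈ D.O) (hfV : -f ∈ D.V)
    (haO : ∀ i, a i ∈ D.O) (ha : ∀ i, 0 < i → D.Good (a i)) {k : ℕ} {δ : ℂ} {ε : ℝ}
    (hε : 0 < ε) (hsep : Metric.ball (δ - a k) ε ⊆ D.Wᶜ) :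
    ∃ C, ∀ n, k < n → TailsNeZero a n → ‖cfTail a k n - δ‖ < ε / 2 →
      ∀ i j, ‖contMat (seg a k (n + 1)) i j‖ ≤ C := by
  have hf : f ≠ 0 := by rintro rfl; exact h0 (by simpa using hfV)
  have hseed : ∀ n, 0 < n → a n - f ∈ D.goodRegion := fun n hn =>
    ⟨a n, ha n hn, by simpa using hfV⟩
  -- `π n` replaces the last partial quotient `a n` by `a n - f`: it is trapped in `a k + W`,
  -- hence `ε`-far from `δ`, while it differs from `cfTail a k n = p / q` by `±f / (q (q - f q'))`.
  set π : ℕ → ℂ := fun n => cfEval (seg a k n) (a n - f)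
  have hπW : ∀ n, k < n → π n - a k ∈ D.W := fun n hn => by
    simp only [π]
    rw [seg_eq_cons a hn, cfEval_cons, add_sub_cancel_left]
    exact D.inv_mem_W (D.cfEval_seg_mem_goodRegion ha k.succ_pos (hseed n (by omega)))
  have hfar : ∀ n, k < n → ε ≤ ‖π n - δ‖ := fun n hn => by
    by_contra! h
    refine hsep ?_ (hπW n hn)
    rwa [Metric.mem_ball, dist_eq_norm, sub_sub_sub_cancel_right]
  obtain ⟨R, hR⟩ := D.exists_forall_mem_W_norm_le
  obtain ⟨m, hm, hO⟩ := D.exists_pos_forall_le_norm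
  obtain ⟨C, hC⟩ := exists_norm_entries_le hm hO hfO hf (half_pos hε)
    (max (‖δ‖ + ε) (‖a k‖ + R))
  refine ⟨C, fun n hkn hzf hclose => ?_⟩
  obtain ⟨hq, hval⟩ := cfTail_eq_div a hzf hkn.le
  obtain ⟨hr, hπval⟩ := seg_succ a hkn.le ▸ cfEval_sub_eq_div (seg a k n) (a n) f
    (suffixesNeZero_seg a hkn.le fun j hj _ => D.ne_zero_of_mem_goodRegion h0
      (D.cfEval_seg_mem_goodRegion ha (by omega) (hseed n (by omega))))
  refine hC _ (D.contMat_seg_mem haO k _) (by simp [det_contMat]) hq hr ?_ ?_ ?_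
  · rw [← hval]
    have := norm_sub_norm_le (cfTail a k n) δ
    exact le_max_of_le_left (by linarith)
  · rw [← hπval]
    have := norm_sub_norm_le (π n) (a k)
    exact le_max_of_le_right (by linarith [hR _ (hπW n hkn)])
  · rw [← hπval, ← hval]
    have := norm_sub_le_norm_sub_add_norm_sub (π n) (cfTail a k n) δ
    linarith [hfar n hkn]

lemma tailLimitsMemW_of_zero_notMem (h0 : (0 : ℂ) ∉ D.V) {f : ℂ} (hfO : f ∈ D.O)
    (hfV : -f ∈ D.V) (haO : ∀ i, a i ∈ D.O) (ha : ∀ i, 0 < i → D.Good (a i)) {φ : ℕ → ℕ}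
    (hφ : StrictMono φ) (hzf : ∀ m, TailsNeZero a (φ m)) : D.TailLimitsMemW a φ := by
  intro k δ hδ
  by_contra hδW
  obtain ⟨ε, hε, hsep⟩ := Metric.isOpen_iff.1 D.isClosed_W.isOpen_compl _ hδW
  obtain ⟨C, hC⟩ := D.exists_norm_contMat_le h0 hfO hfV haO ha hε hsep
  set S := {N : Matrix (Fin 2) (Fin 2) ℂ | ∀ i j, N i j ∈ {x | x ∈ D.O ∧ ‖x‖ ≤ C}}
  have hS : S.Finite := Set.Finite.pi' fun _ => Set.Finite.pi' fun _ => D.finite_mem_norm_le C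
  have hbounded : ∀ᶠ m in atTop, k < φ m ∧ contMat (seg a k (φ m + 1)) ∈ S := by
    filter_upwards [hδ (Metric.ball_mem_nhds δ (half_pos hε)),
      hφ.tendsto_atTop.eventually_gt_atTop k] with m hm hkm
    rw [Set.mem_preimage, Metric.mem_ball, dist_eq_norm] at hm
    exact ⟨hkm, fun i j => ⟨D.contMat_seg_mem haO k _ i j, hC _ hkm (hzf m) hm i j⟩⟩
  obtain ⟨M, hM⟩ := eventually_atTop.1 hbounded
  obtain ⟨m₁, hm₁, m₂, -, hlt, heq⟩ :=
    (Set.Ici_infinite M).exists_lt_map_eq_of_mapsTo (fun m hm => (hM m hm).2) hS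
  exact contMat_seg_ne a (hM m₁ hm₁).1.le (hφ hlt) (hzf m₂) heq

variable {D}

lemma TailLimitsMemW.ne {φ : ℕ → ℕ} (hW : D.TailLimitsMemW a φ) (hφ : Tendsto φ atTop atTop)
    (hzf : ∀ m, TailsNeZero a (φ m)) {k : ℕ} (hgood : D.Good (a (k + 2))) {δ : ℂ}
    (hδ : Tendsto (fun m => cfTail a k (φ m)) atTop (𝓝 δ)) : δ ≠ a k := by
  rintro rfl
  have hinv : Tendsto (fun m => (cfTail a (k + 1) (φ m))⁻¹) atTop (𝓝[≠] 0) := by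
    refine tendsto_nhdsWithin_iff.2 ⟨?_, ?_⟩
    · refine (sub_self (a k) ▸ hδ.sub_const (a k)).congr' ?_
      filter_upwards [hφ.eventually_gt_atTop k] with m hm
      rw [cfTail_add_one a hm, inv_inv]
    · filter_upwards [hφ.eventually_gt_atTop k] with m hm
      exact inv_ne_zero (hzf m (k + 1) k.succ_pos hm)
  have hbig :
      Tendsto (fun m => cfTail a (k + 1) (φ m) - a (k + 1)) atTop (Bornology.cobounded ℂ) :=
    (tendsto_sub_const_cobounded _).comp
      (by simpa [Function.comp_def] using tendsto_inv₀_nhdsNE_zero.comp hinv)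
  have hzero : Tendsto (fun m => cfTail a (k + 2) (φ m)) atTop (𝓝 0) := by
    refine (tendsto_inv₀_cobounded.comp hbig).congr' ?_
    filter_upwards [hφ.eventually_gt_atTop (k + 1)] with m hm
    exact (cfTail_add_one a hm).symm
  exact hgood.neg_notMem_interior (D.W_subset_interior (by simpa using hW (k + 2) 0 hzero))

lemma TailLimitsMemW.tendsto_cfTail_succ {φ : ℕ → ℕ} (hW : D.TailLimitsMemW a φ)
    (hφ : Tendsto φ atTop atTop) (hzf : ∀ m, TailsNeZero a (φ m))
    (ha : ∀ i, 0 < i → D.Good (a i)) {k : ℕ} {δ : ℂ}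
    (hδ : Tendsto (fun m => cfTail a k (φ m)) atTop (𝓝 δ)) :
    Tendsto (fun m => cfTail a (k + 1) (φ m)) atTop (𝓝 (δ - a k)⁻¹) := by
  refine ((hδ.sub_const (a k)).inv₀ (sub_ne_zero.2 (hW.ne hφ hzf (ha _ (by omega)) hδ))).congr' ?_
  filter_upwards [hφ.eventually_gt_atTop k] with m hm
  exact (cfTail_add_one a hm).symm

variable (D)

lemma exists_tailLimitsMemW {f : ℂ} (hfO : f ∈ D.O) (hfV : -f ∈ D.V) (haO : ∀ i, a i ∈ D.O)
    (ha : ∀ i, 0 < i → D.Good (a i)) {α : ℂ} (hα : Tendsto (cfTail a 0) atTop (𝓝 α)) :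
    ∃ φ, StrictMono φ ∧ (∀ m, TailsNeZero a (φ m)) ∧ D.TailLimitsMemW a φ := by
  obtain ⟨φ, hφ, hzf⟩ :=
    extraction_of_frequently_atTop (frequently_tailsNeZero a (fun i hi => (ha i hi).ne_zero) hα)
  refine ⟨φ, hφ, hzf, ?_⟩
  by_cases h0 : (0 : ℂ) ∈ D.V
  · exact D.tailLimitsMemW_of_zero_mem h0 ha hφ.tendsto_atTop
  · exact D.tailLimitsMemW_of_zero_notMem h0 hfO hfV haO ha hφ hzf

lemma eq_of_tendsto_cfTail {f : ℂ} (hfO : f ∈ D.O) (hfV : -f ∈ D.V) {b : ℕ → ℂ}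
    (haO : ∀ i, a i ∈ D.O) (hbO : ∀ i, b i ∈ D.O) (ha : ∀ i, 0 < i → D.Good (a i))
    (hb : ∀ i, 0 < i → D.Good (b i)) {α : ℂ} (hαa : Tendsto (cfTail a 0) atTop (𝓝 α))
    (hαb : Tendsto (cfTail b 0) atTop (𝓝 α)) : a = b := by
  obtain ⟨φ, hφ, hzfa, hWa⟩ := D.exists_tailLimitsMemW hfO hfV haO ha hαa
  obtain ⟨ψ, hψ, hzfb, hWb⟩ := D.exists_tailLimitsMemW hfO hfV hbO hb hαb
  have heq : ∀ k γ, Tendsto (fun m => cfTail a k (φ m)) atTop (𝓝 γ) →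
      Tendsto (fun m => cfTail b k (ψ m)) atTop (𝓝 γ) → a k = b k := fun k γ hγa hγb =>
    D.eq_of_sub_mem_interior _ (haO k) _ (hbO k) γ (D.W_subset_interior (hWa k γ hγa))
      (D.W_subset_interior (hWb k γ hγb))
  have hlim : ∀ k, ∃ γ, Tendsto (fun m => cfTail a k (φ m)) atTop (𝓝 γ) ∧
      Tendsto (fun m => cfTail b k (ψ m)) atTop (𝓝 γ) := by
    intro k
    induction k with
    | zero => exact ⟨α, hαa.comp hφ.tendsto_atTop, hαb.comp hψ.tendsto_atTop⟩
    | succ k ih =>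
      obtain ⟨γ, hγa, hγb⟩ := ih
      refine ⟨(γ - a k)⁻¹, hWa.tendsto_cfTail_succ hφ.tendsto_atTop hzfa ha hγa, ?_⟩
      rw [heq k γ hγa hγb]
      exact hWb.tendsto_cfTail_succ hψ.tendsto_atTop hzfb hb hγb
  funext k
  obtain ⟨γ, hγa, hγb⟩ := hlim k
  exact heq k γ hγa hγb

end CFDomain

lemma eq_of_sub_mem_interior_of_disjoint {S V : Set ℂ}
    (hdisj : ∀ c₁ ∈ S, ∀ c₂ ∈ S, c₁ ≠ c₂ →
      Disjoint (interior ((fun w => c₁ + w) '' V)) (interior ((fun w => c₂ + w) '' V)))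
    (c₁ : ℂ) (h₁ : c₁ ∈ S) (c₂ : ℂ) (h₂ : c₂ ∈ S) (z : ℂ) (hz₁ : z - c₁ ∈ interior V)
    (hz₂ : z - c₂ ∈ interior V) : c₁ = c₂ := by
  have hmem : ∀ c, z - c ∈ interior V → z ∈ interior ((fun w => c + w) '' V) := fun c hc => by
    rw [← Homeomorph.coe_addLeft, ← (Homeomorph.addLeft c).image_interior]
    exact ⟨z - c, hc, add_sub_cancel c z⟩
  by_contra hne
  exact Set.disjoint_left.1 (hdisj c₁ h₁ c₂ h₂ hne) (hmem c₁ hz₁) (hmem c₂ hz₂)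

theorem stmt6_general (K : Type) [Field K]
    (ι : K →+* ℂ)
    (Oset : Set ℂ)
    (hO : Oset = Set.range fun x : NumberField.RingOfIntegers K =>
      ι (algebraMap (NumberField.RingOfIntegers K) K x))
    (V0 : Set ℂ) (hV0cpt : IsCompact V0)
    (hcover : ∀ z : ℂ, ∃ c ∈ Oset, z ∈ (fun w => c + w) '' V0)
    (hdisj : ∀ c₁ ∈ Oset, ∀ c₂ ∈ Oset, c₁ ≠ c₂ →
      Disjoint (interior ((fun w => c₁ + w) '' V0))
        (interior ((fun w => c₂ + w) '' V0)))
    (hW : ∃ W : Set ℂ, IsClosed W ∧ W ⊆ interior V0 ∧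
      ∀ c ∈ Oset, ((fun w => c + w) '' V0 ⊆ {x : ℂ | x⁻¹ ∈ interior V0}) →
        ∀ z ∈ (fun w => c + w) '' V0, z⁻¹ ∈ W)
    (α : ℂ) (c d : ℕ → ℂ)
    (hcO : ∀ i, c i ∈ Oset) (hdO : ∀ i, d i ∈ Oset)
    (hcM : ∀ i, 1 ≤ i → (fun w => c i + w) '' V0 ⊆ {x : ℂ | x⁻¹ ∈ interior V0})
    (hdM : ∀ i, 1 ≤ i → (fun w => d i + w) '' V0 ⊆ {x : ℂ | x⁻¹ ∈ interior V0})
    (hcα : Tendsto (fun n => cfC (List.ofFn fun i : Fin (n+1) => c i)) atTop (nhds α))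
    (hdα : Tendsto (fun n => cfC (List.ofFn fun i : Fin (n+1) => d i)) atTop (nhds α)) :
    c = d := by
  obtain ⟨W, hWclosed, hWU, hWmem⟩ := hW
  obtain rfl : Oset = (ι.comp (algebraMap (NumberField.RingOfIntegers K) K)).range :=
    by rw [hO, RingHom.coe_range]; rfl
  obtain ⟨f, hfO, v, hv, hfv⟩ := hcover 0
  let D : CFDomain :=
    { O := (ι.comp (algebraMap (NumberField.RingOfIntegers K) K)).range
      V := V0
      W := W
      isCompact_V := hV0cpt
      nonempty_interior_V := ⟨_, hWU (hWmem _ (hcO 1) (hcM 1 le_rfl) _ ⟨v, hv, rfl⟩)⟩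
      isClosed_W := hWclosed
      W_subset_interior := hWU
      inv_add_mem_W := fun c hc hgood v hv =>
        hWmem c hc (Set.image_subset_iff.2 hgood) _ ⟨v, hv, rfl⟩
      eq_of_sub_mem_interior := eq_of_sub_mem_interior_of_disjoint hdisj }
  have hfV : -f ∈ D.V := by rwa [neg_eq_of_add_eq_zero_right hfv]
  simp only [cfC_ofFn] at hcα hdα
  exact D.eq_of_tendsto_cfTail hfO hfV hcO hdO
    (fun i hi => ⟨hcO i, fun v hv => hcM i hi ⟨v, hv, rfl⟩⟩)
    (fun i hi => ⟨hdO i, fun v hv => hdM i hi ⟨v, hv, rfl⟩⟩) hcα hdα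

/-- With `𝒪` the ring of integers of an imaginary quadratic field embedded in
`ℂ`, `V₀` a compact closed fundamental domain for translation by `𝒪` with
interior `U₀`, and `M = {c ∈ 𝒪 : c + V₀ ⊄ U₀⁻¹}`: every `α ∈ ℂ` has at most
one expression as a convergent infinite continued fraction `[c₀, c₁, …]` with
all `cᵢ ∈ 𝒪` and `cᵢ ∉ M` for `i ≥ 1`. -/
theorem stmt6 (K : Type) [Field K] [NumberField K]
    (hdeg : Module.finrank ℚ K = 2)
    (ι : K →+* ℂ) (him : ∃ x : K, (ι x).im ≠ 0)
    (Oset : Set ℂ)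
    (hO : Oset = Set.range fun x : NumberField.RingOfIntegers K =>
      ι (algebraMap (NumberField.RingOfIntegers K) K x))
    (V0 : Set ℂ) (hV0closed : IsClosed V0) (hV0cpt : IsCompact V0)
    (hcover : ∀ z : ℂ, ∃ c ∈ Oset, z ∈ (fun w => c + w) '' V0)
    (hdisj : ∀ c₁ ∈ Oset, ∀ c₂ ∈ Oset, c₁ ≠ c₂ →
      Disjoint (interior ((fun w => c₁ + w) '' V0))
        (interior ((fun w => c₂ + w) '' V0)))
    (hW : ∃ W : Set ℂ, IsClosed W ∧ W ⊆ interior V0 ∧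
      ∀ c ∈ Oset, ((fun w => c + w) '' V0 ⊆ {x : ℂ | x⁻¹ ∈ interior V0}) →
        ∀ z ∈ (fun w => c + w) '' V0, z⁻¹ ∈ W)
    (α : ℂ) (c d : ℕ → ℂ)
    (hcO : ∀ i, c i ∈ Oset) (hdO : ∀ i, d i ∈ Oset)
    (hcM : ∀ i, 1 ≤ i → (fun w => c i + w) '' V0 ⊆ {x : ℂ | x⁻¹ ∈ interior V0})
    (hdM : ∀ i, 1 ≤ i → (fun w => d i + w) '' V0 ⊆ {x : ℂ | x⁻¹ ∈ interior V0})
    (hcα : Tendsto (fun n => cfC (List.ofFn fun i : Fin (n+1) => c i)) atTop (nhds α))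
    (hdα : Tendsto (fun n => cfC (List.ofFn fun i : Fin (n+1) => d i)) atTop (nhds α)) :
    c = d :=
  stmt6_general K ι Oset hO V0 hV0cpt hcover hdisj hW α c d hcO hdO hcM hdM hcα hdα
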